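/- arXiv:1604.00995 — 2 statements merged into one kernel-verified Lean document; each statement's English description precedes it below -/
import Mathlib

section
/- Let Φ be a norm on ℝ^{n+1} and Ω̂ ⊆ ℝ^n an open set. If u_k ∈ M_{Φ^o}(Ω̂) for every k, u ∈ L¹_loc(Ω̂), and u_k → u in L¹_loc(Ω̂) as k → ∞, then u ∈ BV_loc(Ω̂) and u ∈ M_{Φ^o}(Ω̂). -/
open MeasureTheory Set Filter

noncomputable section

/-- `ℝ^n` with the Euclidean norm. -/
abbrev Rn (n : ℕ) := EuclideanSpace ℝ (Fin n)

/-- `ℝ^{n+1} = ℝ^n × ℝ`. -/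
abbrev Rn1 (n : ℕ) := Rn n × ℝ

/-- Euclidean dot product on `ℝ^n`. -/
def dotn {n : ℕ} (x y : Rn n) : ℝ := ∑ i, x i * y i

/-- Euclidean dot product on `ℝ^{n+1} = ℝ^n × ℝ`. -/
def dotp {n : ℕ} (x y : Rn1 n) : ℝ := dotn x.1 y.1 + x.2 * y.2

/-- Euclidean norm on `ℝ^{n+1} = ℝ^n × ℝ`. -/
def enorm1 {n : ℕ} (x : Rn1 n) : ℝ := Real.sqrt (dotp x x)

/-- `Ψ` is a norm on `ℝ^n`: convex, absolutely one-homogeneous and bounded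
below by a positive multiple of the Euclidean norm. -/
def IsNormN {n : ℕ} (Ψ : Rn n → ℝ) : Prop :=
  ConvexOn ℝ univ Ψ ∧ (∀ (c : ℝ) (ξ : Rn n), Ψ (c • ξ) = |c| * Ψ ξ) ∧
    ∃ c > (0:ℝ), ∀ ξ, c * ‖ξ‖ ≤ Ψ ξ

/-- `Φ` is a norm on `ℝ^{n+1}`. -/
def IsNorm1 {n : ℕ} (Φ : Rn1 n → ℝ) : Prop :=
  ConvexOn ℝ univ Φ ∧ (∀ (c : ℝ) (ξ : Rn1 n), Φ (c • ξ) = |c| * Φ ξ) ∧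
    ∃ c > (0:ℝ), ∀ ξ, c * enorm1 ξ ≤ Φ ξ

/-- Dual norm on `ℝ^n`: `Ψ^o(ξ*) = sup {ξ*·ξ : Ψ(ξ) ≤ 1}`. -/
def dualN {n : ℕ} (Ψ : Rn n → ℝ) (xs : Rn n) : ℝ :=
  sSup ((fun ξ => dotn xs ξ) '' {ξ | Ψ ξ ≤ 1})

/-- Dual norm on `ℝ^{n+1}`. -/
def dual1 {n : ℕ} (Φ : Rn1 n → ℝ) (xs : Rn1 n) : ℝ :=
  sSup ((fun ξ => dotp xs ξ) '' {ξ | Φ ξ ≤ 1})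

/-- `Φ` is cylindrical over `φ`: `Φ(ξ̂,ξ_{n+1}) = max (φ(ξ̂), |ξ_{n+1}|)`. -/
def Cylindrical {n : ℕ} (Φ : Rn1 n → ℝ) (φ : Rn n → ℝ) : Prop :=
  ∀ ξ : Rn1 n, Φ ξ = max (φ ξ.1) |ξ.2|

/-- `A` is an open set compactly contained in `O`. -/
def CpCtd {E : Type*} [TopologicalSpace E] (A O : Set E) : Prop :=
  IsOpen A ∧ IsCompact (closure A) ∧ closure A ⊆ O

/-- Divergence of a vector field on `ℝ^n`. -/
def divN {n : ℕ} (η : Rn n → Rn n) (x : Rn n) : ℝ :=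
  ∑ i, fderiv ℝ η x (EuclideanSpace.single i (1:ℝ)) i

/-- Divergence of a vector field on `ℝ^{n+1} = ℝ^n × ℝ`. -/
def div1 {n : ℕ} (η : Rn1 n → Rn1 n) (z : Rn1 n) : ℝ :=
  (∑ i, (fderiv ℝ η z (EuclideanSpace.single i (1:ℝ), (0:ℝ))).1 i) +
    (fderiv ℝ η z ((0 : Rn n), (1:ℝ))).2

/-- Admissible test vector fields on `ℝ^n`: `C^1`, compactly supported in `A`,
with values in the unit ball of `Ψ`. -/
def TestN {n : ℕ} (A : Set (Rn n)) (Ψ : Rn n → ℝ) (η : Rn n → Rn n) : Prop :=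
  ContDiff ℝ 1 η ∧ HasCompactSupport η ∧ tsupport η ⊆ A ∧ ∀ x, Ψ (η x) ≤ 1

/-- Admissible test vector fields on `ℝ^{n+1}`. -/
def Test1 {n : ℕ} (A : Set (Rn1 n)) (Φ : Rn1 n → ℝ) (η : Rn1 n → Rn1 n) : Prop :=
  ContDiff ℝ 1 η ∧ HasCompactSupport η ∧ tsupport η ⊆ A ∧ ∀ z, Φ (η z) ≤ 1

/-- The set of numbers whose supremum is the anisotropic perimeter `P_Ψ(E,A)` in `ℝ^n`. -/
def perSetN {n : ℕ} (Ψ : Rn n → ℝ) (E A : Set (Rn n)) : Set ℝ :=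
  {r | ∃ η, TestN A Ψ η ∧ r = -∫ x in E, divN η x}

/-- Anisotropic perimeter `P_Ψ(E,A)` in `ℝ^n`. -/
def PerN {n : ℕ} (Ψ : Rn n → ℝ) (E A : Set (Rn n)) : ℝ := sSup (perSetN Ψ E A)

/-- `E` has locally finite perimeter in `O ⊆ ℝ^n`. -/
def BVlocSetN {n : ℕ} (O E : Set (Rn n)) : Prop :=
  ∀ A, CpCtd A O → BddAbove (perSetN (fun x => ‖x‖) E A)

/-- `E` is a minimizer of `P_Ψ` (by compact perturbations) in `O ⊆ ℝ^n`. -/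
def MinPerN {n : ℕ} (Ψ : Rn n → ℝ) (O E : Set (Rn n)) : Prop :=
  BVlocSetN O E ∧ ∀ A, CpCtd A O → ∀ F, BVlocSetN O F →
    IsCompact (closure (symmDiff E F)) → closure (symmDiff E F) ⊆ A →
      PerN Ψ E A ≤ PerN Ψ F A

/-- The set of numbers whose supremum is the anisotropic perimeter `P_Φ(E,A)` in `ℝ^{n+1}`. -/
def perSet1 {n : ℕ} (Φ : Rn1 n → ℝ) (E A : Set (Rn1 n)) : Set ℝ :=
  {r | ∃ η, Test1 A Φ η ∧ r = -∫ z in E, div1 η z}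

/-- Anisotropic perimeter `P_Φ(E,A)` in `ℝ^{n+1}`. -/
def Per1 {n : ℕ} (Φ : Rn1 n → ℝ) (E A : Set (Rn1 n)) : ℝ := sSup (perSet1 Φ E A)

/-- `E` has locally finite perimeter in `O ⊆ ℝ^{n+1}`. -/
def BVlocSet1 {n : ℕ} (O E : Set (Rn1 n)) : Prop :=
  ∀ A, CpCtd A O → BddAbove (perSet1 enorm1 E A)

/-- `E` is a minimizer of `P_Φ` (by compact perturbations) in `O ⊆ ℝ^{n+1}`. -/
def MinPer1 {n : ℕ} (Φ : Rn1 n → ℝ) (O E : Set (Rn1 n)) : Prop :=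
  BVlocSet1 O E ∧ ∀ A, CpCtd A O → ∀ F, BVlocSet1 O F →
    IsCompact (closure (symmDiff E F)) → closure (symmDiff E F) ⊆ A →
      Per1 Φ E A ≤ Per1 Φ F A

/-- The set of numbers whose supremum is the total variation `TV(u,A)`. -/
def varSet {n : ℕ} (A : Set (Rn n)) (u : Rn n → ℝ) : Set ℝ :=
  {r | ∃ η, TestN A (fun x => ‖x‖) η ∧ r = ∫ x in A, u x * divN η x}

/-- Total variation `TV(u,A)`. -/
def TV {n : ℕ} (u : Rn n → ℝ) (A : Set (Rn n)) : ℝ := sSup (varSet A u)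

/-- `u ∈ BV_loc(Ω̂)`. -/
def BVlocFun {n : ℕ} (Ω : Set (Rn n)) (u : Rn n → ℝ) : Prop :=
  (∀ A, CpCtd A Ω → IntegrableOn u A) ∧ ∀ A, CpCtd A Ω → BddAbove (varSet A u)

/-- The set of numbers whose supremum is `G_{Φ^o}(u,A)`. -/
def Gset {n : ℕ} (Φ : Rn1 n → ℝ) (A : Set (Rn n)) (u : Rn n → ℝ) : Set ℝ :=
  {r | ∃ η : Rn n → Rn1 n, ContDiff ℝ 1 η ∧ HasCompactSupport η ∧ tsupport η ⊆ A ∧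
    (∀ x, Φ (η x) ≤ 1) ∧ r = ∫ x in A, (u x * divN (fun y => (η y).1) x + (η x).2)}

/-- The functional `G_{Φ^o}(u,A)`. -/
def Gfun {n : ℕ} (Φ : Rn1 n → ℝ) (u : Rn n → ℝ) (A : Set (Rn n)) : ℝ := sSup (Gset Φ A u)

/-- `w` has compact support contained in `A`. -/
def CptSupp {n : ℕ} (A : Set (Rn n)) (w : Rn n → ℝ) : Prop :=
  IsCompact (tsupport w) ∧ tsupport w ⊆ A

/-- `u` is a minimizer of `G_{Φ^o}` by compact perturbations in `Ω̂`,
i.e. `u ∈ M_{Φ^o}(Ω̂)`. -/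
def MinG {n : ℕ} (Φ : Rn1 n → ℝ) (Ω : Set (Rn n)) (u : Rn n → ℝ) : Prop :=
  BVlocFun Ω u ∧ ∀ A, CpCtd A Ω → ∀ v, BVlocFun Ω v →
    CptSupp A (fun x => u x - v x) → Gfun Φ u A ≤ Gfun Φ v A

/-- `u` is a minimizer of the total variation by compact perturbations in `Ω̂`. -/
def MinTV {n : ℕ} (Ω : Set (Rn n)) (u : Rn n → ℝ) : Prop :=
  BVlocFun Ω u ∧ ∀ A, CpCtd A Ω → ∀ v, BVlocFun Ω v →
    CptSupp A (fun x => u x - v x) → TV u A ≤ TV v A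

/-- Subgraph of `u : Ω̂ → ℝ`. -/
def sg {n : ℕ} (Ω : Set (Rn n)) (u : Rn n → ℝ) : Set (Rn1 n) :=
  {p | p.1 ∈ Ω ∧ p.2 < u p.1}

/-- `S` is locally a Lipschitz graph at `p`. -/
def IsLocLipGraphAt {n : ℕ} (S : Set (Rn1 n)) (p : Rn1 n) : Prop :=
  ∃ U : Set (Rn1 n), IsOpen U ∧ p ∈ U ∧ ∃ e : Rn1 n, enorm1 e = 1 ∧
    ∃ g : Rn1 n → ℝ, (∃ L : NNReal, LipschitzOnWith L g {y | dotp y e = 0}) ∧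
      S ∩ U = {z | ∃ y, dotp y e = 0 ∧ z = y + g y • e} ∩ U

/-- `Φ` is a partially monotone norm on `ℝ^{n+1}`. -/
def PartMono {n : ℕ} (Φ : Rn1 n → ℝ) : Prop :=
  ∀ ξ η : Rn1 n, Φ (ξ.1, 0) ≤ Φ (η.1, 0) → Φ ((0 : Rn n), ξ.2) ≤ Φ ((0 : Rn n), η.2) →
    Φ ξ ≤ Φ η

end

/-!
Passing to the limit in the minimality of `u_k` needs a bound on each single test field `η`,
not only on the supremum `G(u_k, A)`. Compare `u_k` with `(1 - ζ) u_k + ζ w`, where the cutoff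
`ζ` equals `1` near `supp η`, and split every test field `θ` of the competitor as
`(1 - ζ) θ + ζ θ`. Since `η` plus any field supported where `ζ ≠ 1` is again admissible for
`u_k`, this gives `∫ (u_k div η' + η_{n+1}) ≤ G(w, A) + C ∫ |u_k - w| |∇ζ|`, where `η'` is the
horizontal part of `η`. Both sides pass to the L¹ limit. With `w = v` the error vanishes,
because `u = v` wherever `∇ζ ≠ 0`; with `w = 0` and `ζ` fixed on a larger set it bounds
`G(u, A)`, hence the total variation of `u`.
-/

open scoped Topology Manifold

section

variable {n : ℕ}

lemma dotn_self (x : Rn n) : dotn x x = ‖x‖ ^ 2 := by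
  rw [EuclideanSpace.norm_eq, Real.sq_sqrt (by positivity)]
  simp [dotn, sq]

lemma enorm1_eq_sqrt (x : Rn1 n) : enorm1 x = √(‖x.1‖ ^ 2 + x.2 ^ 2) := by
  rw [enorm1, dotp, dotn_self, sq x.2]

lemma norm_fst_le_enorm1 (x : Rn1 n) : ‖x.1‖ ≤ enorm1 x := by
  rw [enorm1_eq_sqrt]
  exact Real.le_sqrt_of_sq_le (by nlinarith [sq_nonneg x.2])

lemma abs_snd_le_enorm1 (x : Rn1 n) : |x.2| ≤ enorm1 x := by
  rw [enorm1_eq_sqrt]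
  exact Real.abs_le_sqrt (by nlinarith [sq_nonneg ‖x.1‖])

namespace IsNorm1

variable {Φ : Rn1 n → ℝ}

lemma apply_zero (hΦ : IsNorm1 Φ) : Φ 0 = 0 := by
  simpa using hΦ.2.1 0 0

lemma nonneg (hΦ : IsNorm1 Φ) (ξ : Rn1 n) : 0 ≤ Φ ξ := by
  obtain ⟨c, hc, hcΦ⟩ := hΦ.2.2
  exact (mul_nonneg hc.le (Real.sqrt_nonneg _)).trans (hcΦ ξ)

lemma apply_smul_le_one (hΦ : IsNorm1 Φ) {t : ℝ} (ht : |t| ≤ 1) {ξ : Rn1 n} (hξ : Φ ξ ≤ 1) :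
    Φ (t • ξ) ≤ 1 := by
  rw [hΦ.2.1]
  nlinarith [abs_nonneg t, hΦ.nonneg ξ]

lemma exists_enorm1_le (hΦ : IsNorm1 Φ) : ∃ C > 0, ∀ ξ, Φ ξ ≤ 1 → enorm1 ξ ≤ C := by
  obtain ⟨c, hc, hcΦ⟩ := hΦ.2.2
  refine ⟨1 / c, one_div_pos.2 hc, fun ξ hξ => ?_⟩
  rw [le_div_iff₀ hc, mul_comm]
  exact (hcΦ ξ).trans hξ

lemma exists_norm_fst_le (hΦ : IsNorm1 Φ) : ∃ C, ∀ ξ, Φ ξ ≤ 1 → ‖ξ.1‖ ≤ C := by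
  obtain ⟨C, -, hC⟩ := hΦ.exists_enorm1_le
  exact ⟨C, fun ξ hξ => (norm_fst_le_enorm1 ξ).trans (hC ξ hξ)⟩

lemma continuous (hΦ : IsNorm1 Φ) : Continuous Φ :=
  continuousOn_univ.1 (hΦ.1.continuousOn isOpen_univ)

lemma exists_apply_prod_zero_le (hΦ : IsNorm1 Φ) :
    ∃ M > 0, ∀ ξ : Rn n, ‖ξ‖ ≤ 1 → Φ (ξ, 0) ≤ M := by
  obtain ⟨M, hM⟩ := (isCompact_closedBall (0 : Rn n) 1).bddAbove_image
    (hΦ.continuous.comp (continuous_id.prodMk continuous_const)).continuousOn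
  refine ⟨max M 1, by positivity, fun ξ hξ => (hM ⟨ξ, ?_, rfl⟩).trans (le_max_left _ _)⟩
  simpa using hξ

end IsNorm1

lemma MeasureTheory.IntegrableOn.mul_of_hasCompactSupport {X : Type*} [TopologicalSpace X]
    [MeasurableSpace X] [OpensMeasurableSpace X] {μ : Measure X} {A : Set X} {u g : X → ℝ}
    (hu : IntegrableOn u A μ) (hg : Continuous g) (hgc : HasCompactSupport g) :
    IntegrableOn (fun x => u x * g x) A μ :=
  hu.mul_of_top_left (hg.memLp_top_of_hasCompactSupport hgc _)

lemma continuous_divN {η : Rn n → Rn n} (hη : ContDiff ℝ 1 η) : Continuous (divN η) :=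
  continuous_finsetSum _ fun i _ => (EuclideanSpace.proj i).continuous.comp
    ((hη.continuous_fderiv one_ne_zero).clm_apply continuous_const)

lemma support_divN_subset (η : Rn n → Rn n) : Function.support (divN η) ⊆ tsupport η := by
  intro x hx
  by_contra hxη
  have hfd : fderiv ℝ η x = 0 := by
    rw [(notMem_tsupport_iff_eventuallyEq.1 hxη).fderiv_eq]
    simp
  simp [divN, hfd] at hx

lemma hasCompactSupport_divN {η : Rn n → Rn n} (hη : HasCompactSupport η) :
    HasCompactSupport (divN η) :=
  hη.mono' (support_divN_subset η)

lemma divN_add {η θ : Rn n → Rn n} (hη : ContDiff ℝ 1 η) (hθ : ContDiff ℝ 1 θ) (x : Rn n) :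
    divN (fun y => η y + θ y) x = divN η x + divN θ x := by
  simp [divN, fderiv_fun_add (hη.differentiable one_ne_zero x) (hθ.differentiable one_ne_zero x),
    Finset.sum_add_distrib]

lemma fderiv_apply_eq_sum (f : Rn n → ℝ) (x v : Rn n) :
    fderiv ℝ f x v = ∑ i, v i * fderiv ℝ f x (EuclideanSpace.single i 1) := by
  conv_lhs => rw [← (EuclideanSpace.basisFun (Fin n) ℝ).sum_repr v]
  simp

lemma divN_smul {f : Rn n → ℝ} {θ : Rn n → Rn n} (hf : ContDiff ℝ 1 f) (hθ : ContDiff ℝ 1 θ)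
    (x : Rn n) : divN (fun y => f y • θ y) x = f x * divN θ x + fderiv ℝ f x (θ x) := by
  simp only [divN, fderiv_fun_smul (hf.differentiable one_ne_zero x)
    (hθ.differentiable one_ne_zero x), fderiv_apply_eq_sum f x (θ x)]
  simp [Finset.mul_sum, Finset.sum_add_distrib, mul_comm]

lemma divN_const_smul {θ : Rn n → Rn n} (hθ : ContDiff ℝ 1 θ) (c : ℝ) (x : Rn n) :
    divN (fun y => c • θ y) x = c * divN θ x := by
  simpa using divN_smul contDiff_const hθ x

def GTest (Φ : Rn1 n → ℝ) (A : Set (Rn n)) (η : Rn n → Rn1 n) : Prop :=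
  ContDiff ℝ 1 η ∧ HasCompactSupport η ∧ tsupport η ⊆ A ∧ ∀ x, Φ (η x) ≤ 1

noncomputable def gInt (u : Rn n → ℝ) (A : Set (Rn n)) (η : Rn n → Rn1 n) : ℝ :=
  ∫ x in A, (u x * divN (fun y => (η y).1) x + (η x).2)

lemma Gset_eq_image (Φ : Rn1 n → ℝ) (A : Set (Rn n)) (u : Rn n → ℝ) :
    Gset Φ A u = gInt u A '' {η | GTest Φ A η} := by
  ext r
  simp [Gset, GTest, gInt, and_assoc, eq_comm]

section GTest

variable {Φ : Rn1 n → ℝ} {A : Set (Rn n)}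

lemma GTest.zero (hΦ : IsNorm1 Φ) : GTest Φ A 0 :=
  ⟨contDiff_const, .zero, by simp, fun _ => by simp [hΦ.apply_zero]⟩

lemma GTest.mono {B : Set (Rn n)} {η : Rn n → Rn1 n} (hη : GTest Φ A η) (hAB : A ⊆ B) :
    GTest Φ B η :=
  ⟨hη.1, hη.2.1, hη.2.2.1.trans hAB, hη.2.2.2⟩

lemma GTest.smul (hΦ : IsNorm1 Φ) {η : Rn n → Rn1 n} (hη : GTest Φ A η) {f : Rn n → ℝ}
    (hf : ContDiff ℝ 1 f) (hf1 : ∀ x, |f x| ≤ 1) : GTest Φ A (fun x => f x • η x) :=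
  ⟨hf.smul hη.1, hη.2.1.smul_left (f := f), (tsupport_smul_subset_right _ _).trans hη.2.2.1,
    fun x => hΦ.apply_smul_le_one (hf1 x) (hη.2.2.2 x)⟩

lemma GTest.add {η θ : Rn n → Rn1 n} (hη : GTest Φ A η) (hθ : GTest Φ A θ)
    (hdisj : Disjoint (Function.support η) (Function.support θ)) :
    GTest Φ A (fun x => η x + θ x) := by
  refine ⟨hη.1.add hθ.1, hη.2.1.add hθ.2.1,
    (tsupport_add η θ).trans (union_subset hη.2.2.1 hθ.2.2.1), fun x => ?_⟩
  by_cases hx : η x = 0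
  · simpa [hx] using hθ.2.2.2 x
  · have : θ x = 0 := Function.notMem_support.1 (hdisj.notMem_of_mem_left hx)
    simpa [this] using hη.2.2.2 x

end GTest

section FDerivIntegrable

variable {A : Set (Rn n)} {f : Rn n → ℝ} {ζ : Rn n → ℝ}

lemma integrableOn_mul_fderiv_apply (hf : IntegrableOn f A) (hζ : ContDiff ℝ 1 ζ)
    (hζc : HasCompactSupport ζ) {v : Rn n → Rn n} (hv : Continuous v) :
    IntegrableOn (fun x => f x * fderiv ℝ ζ x (v x)) A :=
  hf.mul_of_hasCompactSupport ((hζ.continuous_fderiv one_ne_zero).clm_apply hv)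
    ((hζc.fderiv (𝕜 := ℝ)).mono fun x hx h => hx (by simp [h]))

lemma integrableOn_mul_norm_fderiv (hf : IntegrableOn f A) (hζ : ContDiff ℝ 1 ζ)
    (hζc : HasCompactSupport ζ) : IntegrableOn (fun x => f x * ‖fderiv ℝ ζ x‖) A :=
  hf.mul_of_hasCompactSupport (hζ.continuous_fderiv one_ne_zero).norm (hζc.fderiv (𝕜 := ℝ)).norm

lemma setIntegral_mul_fderiv_apply_le (hf : IntegrableOn f A) (hζ : ContDiff ℝ 1 ζ)
    (hζc : HasCompactSupport ζ) {v : Rn n → Rn n} (hv : Continuous v) {C : ℝ}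
    (hvC : ∀ x, ‖v x‖ ≤ C) :
    ∫ x in A, f x * fderiv ℝ ζ x (v x) ≤ C * ∫ x in A, |f x| * ‖fderiv ℝ ζ x‖ := by
  rw [← integral_const_mul]
  refine integral_mono (integrableOn_mul_fderiv_apply hf hζ hζc hv)
    ((integrableOn_mul_norm_fderiv hf.abs hζ hζc).const_mul C) fun x => ?_
  calc f x * fderiv ℝ ζ x (v x) ≤ |f x| * ‖fderiv ℝ ζ x (v x)‖ := by
        rw [Real.norm_eq_abs, ← abs_mul]; exact le_abs_self _
    _ ≤ |f x| * (‖fderiv ℝ ζ x‖ * C) := by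
        gcongr
        exact (fderiv ℝ ζ x).le_opNorm_of_le (hvC x)
    _ = C * (|f x| * ‖fderiv ℝ ζ x‖) := by ring

end FDerivIntegrable

section gInt

variable {A : Set (Rn n)} {u w : Rn n → ℝ} {η θ : Rn n → Rn1 n}

lemma integrableOn_mul_divN_fst (hu : IntegrableOn u A) (hη : ContDiff ℝ 1 η)
    (hηc : HasCompactSupport η) : IntegrableOn (fun x => u x * divN (fun y => (η y).1) x) A :=
  hu.mul_of_hasCompactSupport (continuous_divN hη.fst)
    (hasCompactSupport_divN (hηc.comp_left (g := Prod.fst) rfl))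

lemma integrableOn_snd (hη : ContDiff ℝ 1 η) (hηc : HasCompactSupport η) :
    IntegrableOn (fun x => (η x).2) A :=
  (hη.snd.continuous.integrable_of_hasCompactSupport
    (hηc.comp_left (g := Prod.snd) rfl)).integrableOn

lemma integrableOn_gIntegrand (hu : IntegrableOn u A) (hη : ContDiff ℝ 1 η)
    (hηc : HasCompactSupport η) :
    IntegrableOn (fun x => u x * divN (fun y => (η y).1) x + (η x).2) A :=
  (integrableOn_mul_divN_fst hu hη hηc).add (integrableOn_snd hη hηc)

lemma gInt_eq_add (hu : IntegrableOn u A) (hη : ContDiff ℝ 1 η) (hηc : HasCompactSupport η) :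
    gInt u A η = (∫ x in A, u x * divN (fun y => (η y).1) x) + ∫ x in A, (η x).2 :=
  integral_add (integrableOn_mul_divN_fst hu hη hηc) (integrableOn_snd hη hηc)

lemma gInt_add (hu : IntegrableOn u A) (hη : ContDiff ℝ 1 η) (hηc : HasCompactSupport η)
    (hθ : ContDiff ℝ 1 θ) (hθc : HasCompactSupport θ) :
    gInt u A (fun x => η x + θ x) = gInt u A η + gInt u A θ := by
  have hpt : ∀ x, u x * divN (fun y => (η y + θ y).1) x + (η x + θ x).2
      = (u x * divN (fun y => (η y).1) x + (η x).2)
        + (u x * divN (fun y => (θ y).1) x + (θ x).2) := fun x => by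
    simp only [Prod.fst_add, Prod.snd_add, divN_add hη.fst hθ.fst x]
    ring
  rw [gInt, integral_congr_ae (ae_of_all _ hpt),
    integral_add (integrableOn_gIntegrand hu hη hηc) (integrableOn_gIntegrand hu hθ hθc)]
  rfl

lemma mul_divN_mix {ζ : Rn n → ℝ} (hζ : ContDiff ℝ 1 ζ) {g : Rn n → Rn n} (hg : ContDiff ℝ 1 g)
    (t : ℝ) (x : Rn n) :
    ((1 - ζ x) * u x + ζ x * w x) * divN g x + t
      = (u x * divN (fun y => (1 - ζ y) • g y) x + (1 - ζ x) * t)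
        + (w x * divN (fun y => ζ y • g y) x + ζ x * t)
        + (u x - w x) * fderiv ℝ ζ x (g x) := by
  rw [divN_smul (contDiff_const.sub hζ) hg, divN_smul hζ hg, fderiv_const_sub]
  simp only [neg_apply]
  ring

lemma gInt_mix (hu : IntegrableOn u A) (hw : IntegrableOn w A) {ζ : Rn n → ℝ}
    (hζ : ContDiff ℝ 1 ζ) (hζc : HasCompactSupport ζ) (hθ : ContDiff ℝ 1 θ)
    (hθc : HasCompactSupport θ) :
    gInt (fun x => (1 - ζ x) * u x + ζ x * w x) A θ
      = gInt u A (fun x => (1 - ζ x) • θ x) + gInt w A (fun x => ζ x • θ x)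
        + ∫ x in A, (u x - w x) * fderiv ℝ ζ x (θ x).1 := by
  have h₁ := integrableOn_gIntegrand hu ((contDiff_const.sub hζ).smul hθ)
    (hθc.smul_left (f := fun x => 1 - ζ x))
  have h₂ := integrableOn_gIntegrand hw (hζ.smul hθ) (hθc.smul_left (f := ζ))
  simp only [Pi.smul_apply', Prod.smul_fst, Prod.smul_snd, smul_eq_mul] at h₁ h₂
  have hcross : IntegrableOn (fun x => (u x - w x) * fderiv ℝ ζ x (θ x).1) A :=
    integrableOn_mul_fderiv_apply (hu.sub hw) hζ hζc hθ.fst.continuous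
  rw [gInt, integral_congr_ae (ae_of_all _ fun x => mul_divN_mix hζ hθ.fst (θ x).2 x),
    integral_add (h₁.fun_add h₂) hcross, integral_add h₁ h₂]
  rfl

end gInt

lemma gInt_eq_of_subset {A B : Set (Rn n)} (hB : MeasurableSet B) (hAB : A ⊆ B) (u : Rn n → ℝ)
    {η : Rn n → Rn1 n} (hηA : tsupport η ⊆ A) : gInt u B η = gInt u A η := by
  refine setIntegral_eq_of_subset_of_forall_sdiff_eq_zero hB hAB fun x hx => ?_
  have hxη : x ∉ tsupport η := fun h => hx.2 (hηA h)
  have hdiv : divN (fun y => (η y).1) x = 0 := Function.notMem_support.1 fun h =>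
    hxη (tsupport_comp_subset (g := Prod.fst) rfl η (support_divN_subset _ h))
  simp [hdiv, image_eq_zero_of_notMem_tsupport hxη]

lemma ContinuousLinearMap.contDiff_hasCompactSupport_comp {E F : Type*} [NormedAddCommGroup E]
    [NormedSpace ℝ E] [NormedAddCommGroup F] [NormedSpace ℝ F] (L : E →L[ℝ] F) {A : Set (Rn n)}
    {η : Rn n → E} (hη : ContDiff ℝ 1 η) (hηc : HasCompactSupport η) (hηA : tsupport η ⊆ A) :
    ContDiff ℝ 1 (L ∘ η) ∧ HasCompactSupport (L ∘ η) ∧ tsupport (L ∘ η) ⊆ A :=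
  ⟨L.contDiff.comp hη, hηc.comp_left L.map_zero, (tsupport_comp_subset L.map_zero η).trans hηA⟩

section Gfun

variable {Φ : Rn1 n → ℝ} {A : Set (Rn n)} {u : Rn n → ℝ}

lemma gInt_le_Gfun (hbdd : BddAbove (Gset Φ A u)) {η : Rn n → Rn1 n} (hη : GTest Φ A η) :
    gInt u A η ≤ Gfun Φ u A :=
  le_csSup hbdd (by rw [Gset_eq_image]; exact mem_image_of_mem _ hη)

lemma Gfun_le (hΦ : IsNorm1 Φ) {b : ℝ} (h : ∀ η, GTest Φ A η → gInt u A η ≤ b) :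
    Gfun Φ u A ≤ b := by
  refine csSup_le ?_ ?_ <;> rw [Gset_eq_image]
  · exact ⟨_, mem_image_of_mem _ (GTest.zero hΦ)⟩
  · rintro _ ⟨η, hη, rfl⟩
    exact h η hη

lemma bddAbove_Gset {b : ℝ} (h : ∀ η, GTest Φ A η → gInt u A η ≤ b) :
    BddAbove (Gset Φ A u) :=
  ⟨b, by rw [Gset_eq_image]; rintro _ ⟨η, hη, rfl⟩; exact h η hη⟩

lemma integral_mul_divN_const_smul {θ : Rn n → Rn n} (hθ : ContDiff ℝ 1 θ) (c : ℝ) :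
    ∫ x in A, u x * divN (fun y => c • θ y) x = c * ∫ x in A, u x * divN θ x := by
  rw [← integral_const_mul]
  congr 1 with x
  rw [divN_const_smul hθ]
  ring

lemma bddAbove_Gset_of_bddAbove_varSet (hΦ : IsNorm1 Φ) (hA : volume A < ⊤)
    (hu : IntegrableOn u A) (hvar : BddAbove (varSet A u)) : BddAbove (Gset Φ A u) := by
  obtain ⟨C, hC, hΦC⟩ := hΦ.exists_enorm1_le
  obtain ⟨M, hM⟩ := hvar
  refine bddAbove_Gset (b := C * M + C * volume.real A) fun η ⟨hη, hηc, hηA, hηΦ⟩ => ?_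
  have hdiv : C⁻¹ * ∫ x in A, u x * divN (fun y => (η y).1) x ≤ M := by
    obtain ⟨hL, hLc, hLA⟩ :=
      (C⁻¹ • ContinuousLinearMap.fst ℝ (Rn n) ℝ).contDiff_hasCompactSupport_comp hη hηc hηA
    rw [← integral_mul_divN_const_smul hη.fst]
    refine hM ⟨_, ⟨hL, hLc, hLA, fun x => ?_⟩, rfl⟩
    simp only [Function.comp_apply, smul_apply, ContinuousLinearMap.coe_fst', norm_smul,
      norm_inv, Real.norm_of_nonneg hC.le]
    rw [inv_mul_le_one₀ hC]
    exact (norm_fst_le_enorm1 _).trans (hΦC _ (hηΦ x))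
  have hsnd : ∫ x in A, (η x).2 ≤ C * volume.real A :=
    (le_abs_self _).trans <| by
      simpa only [Real.norm_eq_abs] using
        norm_setIntegral_le_of_norm_le_const (f := fun x => (η x).2) hA
          fun x _ => (abs_snd_le_enorm1 (η x)).trans (hΦC _ (hηΦ x))
  rw [inv_mul_le_iff₀ hC] at hdiv
  rw [gInt_eq_add hu hη hηc]
  linarith

lemma bddAbove_varSet_of_bddAbove_Gset (hΦ : IsNorm1 Φ) (hG : BddAbove (Gset Φ A u)) :
    BddAbove (varSet A u) := by
  obtain ⟨M, hM, hΦM⟩ := hΦ.exists_apply_prod_zero_le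
  obtain ⟨b, hb⟩ := hG
  refine ⟨M * b, ?_⟩
  rintro _ ⟨η, ⟨hη, hηc, hηA, hη1⟩, rfl⟩
  set L := M⁻¹ • ContinuousLinearMap.inl ℝ (Rn n) ℝ
  have hLη : L ∘ η = fun x => (M⁻¹ • η x, 0) := by
    ext x <;> simp [L]
  obtain ⟨hL, hLc, hLA⟩ := L.contDiff_hasCompactSupport_comp hη hηc hηA
  rw [hLη] at hL hLc hLA
  have hGη : gInt u A (fun x => (M⁻¹ • η x, 0)) ≤ b := by
    refine hb ?_
    rw [Gset_eq_image]
    refine mem_image_of_mem _ ⟨hL, hLc, hLA, fun x => ?_⟩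
    rw [show Φ ((fun x => (M⁻¹ • η x, (0 : ℝ))) x) = Φ (M⁻¹ • (η x, 0)) by simp, hΦ.2.1,
      abs_of_pos (inv_pos.2 hM), inv_mul_le_one₀ hM]
    exact hΦM _ (hη1 x)
  simp only [gInt, add_zero, integral_mul_divN_const_smul hη] at hGη
  rwa [inv_mul_le_iff₀ hM] at hGη

end Gfun

lemma CpCtd.volume_lt_top {A O : Set (Rn n)} (hA : CpCtd A O) : volume A < ⊤ :=
  (measure_mono subset_closure).trans_lt hA.2.1.measure_lt_top

lemma bvlocFun_iff {Φ : Rn1 n → ℝ} (hΦ : IsNorm1 Φ) {Ω : Set (Rn n)} {u : Rn n → ℝ} :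
    BVlocFun Ω u ↔
      (∀ A, CpCtd A Ω → IntegrableOn u A) ∧ ∀ A, CpCtd A Ω → BddAbove (Gset Φ A u) :=
  ⟨fun h => ⟨h.1, fun A hA =>
      bddAbove_Gset_of_bddAbove_varSet hΦ hA.volume_lt_top (h.1 A hA) (h.2 A hA)⟩,
    fun h => ⟨h.1, fun A hA => bddAbove_varSet_of_bddAbove_Gset hΦ (h.2 A hA)⟩⟩

lemma bvlocFun_zero (Ω : Set (Rn n)) : BVlocFun Ω fun _ => 0 :=
  ⟨fun _ _ => integrableOn_zero, fun _ _ => ⟨0, by rintro _ ⟨θ, -, rfl⟩; simp⟩⟩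

lemma exists_cpCtd_closure_subset {A Ω : Set (Rn n)} (hA : CpCtd A Ω) (hΩ : IsOpen Ω) :
    ∃ A', CpCtd A' Ω ∧ closure A ⊆ A' := by
  obtain ⟨L, hLc, hAL, hLΩ⟩ := exists_compact_between hA.2.1 hΩ hA.2.2
  have hL : closure (interior L) ⊆ L := closure_minimal interior_subset hLc.isClosed
  exact ⟨interior L, ⟨isOpen_interior, hLc.of_isClosed_subset isClosed_closure hL,
    hL.trans hLΩ⟩, hAL⟩

structure IsCutoff (ζ : Rn n → ℝ) (K U : Set (Rn n)) : Prop where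
  contDiff : ContDiff ℝ 1 ζ
  hasCompactSupport : HasCompactSupport ζ
  tsupport_subset : tsupport ζ ⊆ U
  mem_Icc : ∀ x, ζ x ∈ Icc (0 : ℝ) 1
  eventually_eq_one : ∀ᶠ x in 𝓝ˢ K, ζ x = 1

lemma exists_isCutoff {K U : Set (Rn n)} (hK : IsCompact K) (hU : IsOpen U) (hKU : K ⊆ U) :
    ∃ ζ, IsCutoff ζ K U := by
  obtain ⟨L, hLc, hKL, hLU⟩ := exists_compact_between hK hU hKU
  obtain ⟨f, hf1, hf0, hf01⟩ :=
    exists_contMDiffMap_one_nhds_of_subset_interior 𝓘(ℝ, Rn n) (n := 1) hK.isClosed hKL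
  have hsupp : Function.support f ⊆ L := fun x hx => by_contra fun h => hx (hf0 x h)
  exact ⟨f, contMDiff_iff_contDiff.1 f.contMDiff, .intro hLc hf0,
    (closure_minimal hsupp hLc.isClosed).trans hLU, hf01, hf1⟩

namespace IsCutoff

variable {ζ : Rn n → ℝ} {K U : Set (Rn n)}

lemma fderiv_eq_zero (hζ : IsCutoff ζ K U) {x : Rn n} (hx : x ∈ K) : fderiv ℝ ζ x = 0 := by
  have h : ζ =ᶠ[𝓝 x] fun _ => 1 := hζ.eventually_eq_one.filter_mono (nhds_le_nhdsSet hx)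
  rw [h.fderiv_eq, fderiv_const_apply]

lemma disjoint_tsupport_one_sub (hζ : IsCutoff ζ K U) :
    Disjoint K (tsupport fun x => 1 - ζ x) := by
  refine Set.disjoint_left.2 fun x hx => notMem_tsupport_iff_eventuallyEq.2 ?_
  filter_upwards [hζ.eventually_eq_one.filter_mono (nhds_le_nhdsSet hx)] with y hy
  simp [hy]

lemma abs_le_one (hζ : IsCutoff ζ K U) (x : Rn n) : |ζ x| ≤ 1 :=
  abs_le.2 ⟨by linarith [(hζ.mem_Icc x).1], (hζ.mem_Icc x).2⟩

lemma abs_one_sub_le_one (hζ : IsCutoff ζ K U) (x : Rn n) : |1 - ζ x| ≤ 1 :=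
  abs_le.2 ⟨by linarith [(hζ.mem_Icc x).2], by linarith [(hζ.mem_Icc x).1]⟩

end IsCutoff

section Comparison

variable {Φ : Rn1 n → ℝ} {Ω A K U : Set (Rn n)} {u w ζ : Rn n → ℝ} {C : ℝ}

lemma gInt_mix_le (hC : ∀ ξ, Φ ξ ≤ 1 → ‖ξ.1‖ ≤ C) (hu : IntegrableOn u A)
    (hw : IntegrableOn w A) (hζ : IsCutoff ζ K U) {θ : Rn n → Rn1 n} (hθ : GTest Φ A θ) :
    gInt (fun x => (1 - ζ x) * u x + ζ x * w x) A θ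
      ≤ gInt u A (fun x => (1 - ζ x) • θ x) + gInt w A (fun x => ζ x • θ x)
        + C * ∫ x in A, |u x - w x| * ‖fderiv ℝ ζ x‖ := by
  rw [gInt_mix hu hw hζ.contDiff hζ.hasCompactSupport hθ.1 hθ.2.1]
  gcongr
  exact setIntegral_mul_fderiv_apply_le (hu.sub hw) hζ.contDiff hζ.hasCompactSupport
    hθ.1.fst.continuous fun x => hC _ (hθ.2.2.2 x)

lemma BVlocFun.mix (hΦ : IsNorm1 Φ) (hu : BVlocFun Ω u) (hw : BVlocFun Ω w)
    (hζ : IsCutoff ζ K U) : BVlocFun Ω (fun x => (1 - ζ x) * u x + ζ x * w x) := by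
  obtain ⟨C, hC⟩ := hΦ.exists_norm_fst_le
  rw [bvlocFun_iff hΦ] at hu hw ⊢
  refine ⟨fun A hA => ?_, fun A hA => ?_⟩
  · exact ((hu.1 A hA).bdd_mul (continuous_const.sub hζ.contDiff.continuous).aestronglyMeasurable
      (ae_of_all _ fun x => hζ.abs_one_sub_le_one x)).add
      ((hw.1 A hA).bdd_mul hζ.contDiff.continuous.aestronglyMeasurable
      (ae_of_all _ fun x => hζ.abs_le_one x))
  · refine bddAbove_Gset (b := Gfun Φ u A + Gfun Φ w A
      + C * ∫ x in A, |u x - w x| * ‖fderiv ℝ ζ x‖) fun θ hθ =>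
      (gInt_mix_le hC (hu.1 A hA) (hw.1 A hA) hζ hθ).trans ?_
    gcongr
    · exact gInt_le_Gfun (hu.2 A hA) (hθ.smul hΦ (contDiff_const.sub hζ.contDiff)
        hζ.abs_one_sub_le_one)
    · exact gInt_le_Gfun (hw.2 A hA) (hθ.smul hΦ hζ.contDiff hζ.abs_le_one)

end Comparison

lemma MinG.gInt_le {Φ : Rn1 n → ℝ} (hΦ : IsNorm1 Φ) {C : ℝ} (hC : ∀ ξ, Φ ξ ≤ 1 → ‖ξ.1‖ ≤ C)
    {Ω A K : Set (Rn n)} {u w ζ : Rn n → ℝ} (hu : MinG Φ Ω u) (hw : BVlocFun Ω w)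
    (hA : CpCtd A Ω) (hζ : IsCutoff ζ K A) {η : Rn n → Rn1 n} (hη : GTest Φ A η)
    (hηK : tsupport η ⊆ K) :
    gInt u A η ≤ Gfun Φ w A + C * ∫ x in A, |u x - w x| * ‖fderiv ℝ ζ x‖ := by
  have huA : IntegrableOn u A := hu.1.1 A hA
  have hGu : BddAbove (Gset Φ A u) := ((bvlocFun_iff hΦ).1 hu.1).2 A hA
  have hGw : BddAbove (Gset Φ A w) := ((bvlocFun_iff hΦ).1 hw).2 A hA
  set v := fun x => (1 - ζ x) * u x + ζ x * w x
  set F := tsupport fun x => 1 - ζ x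
  set S := gInt u A '' {θ | GTest Φ A θ ∧ tsupport θ ⊆ F}
  have hS : S.Nonempty := ⟨_, mem_image_of_mem _ ⟨GTest.zero hΦ, by simp⟩⟩
  have hmin : Gfun Φ u A ≤ Gfun Φ v A := by
    have huv : (fun x => u x - v x) = fun x => ζ x * (u x - w x) := funext fun x => by ring
    refine hu.2 A hA v (hu.1.mix hΦ hw hζ) ?_
    rw [CptSupp, huv]
    exact ⟨hζ.hasCompactSupport.mul_right, tsupport_mul_subset_left.trans hζ.tsupport_subset⟩
  have hadd : ∀ r ∈ S, gInt u A η + r ≤ Gfun Φ u A := by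
    rintro _ ⟨θ, ⟨hθ, hθF⟩, rfl⟩
    have hdisj : Disjoint (Function.support η) (Function.support θ) :=
      (hζ.disjoint_tsupport_one_sub.mono (subset_tsupport η |>.trans hηK)
        (subset_tsupport θ |>.trans hθF))
    rw [← gInt_add huA hη.1 hη.2.1 hθ.1 hθ.2.1]
    exact gInt_le_Gfun hGu (hη.add hθ hdisj)
  have hmix : Gfun Φ v A ≤ sSup S + Gfun Φ w A + C * ∫ x in A, |u x - w x| * ‖fderiv ℝ ζ x‖ := by
    refine Gfun_le hΦ fun θ hθ => (gInt_mix_le hC huA (hw.1 A hA) hζ hθ).trans ?_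
    gcongr
    · refine le_csSup (hGu.mono ?_) (mem_image_of_mem _ ⟨?_, ?_⟩)
      · rw [Gset_eq_image]
        exact image_mono fun θ hθ => hθ.1
      · exact hθ.smul hΦ (contDiff_const.sub hζ.contDiff) hζ.abs_one_sub_le_one
      · exact tsupport_smul_subset_left _ _
    · exact gInt_le_Gfun hGw (hθ.smul hΦ hζ.contDiff hζ.abs_le_one)
  have hSle : sSup S ≤ Gfun Φ u A - gInt u A η :=
    csSup_le hS fun r hr => by linarith [hadd r hr]
  linarith

lemma tendsto_integral_mul_of_tendsto_integral_abs_sub {α : Type*} [MeasurableSpace α]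
    {μ : Measure α} {f : ℕ → α → ℝ} {f₀ g : α → ℝ} (hf : ∀ k, Integrable (f k) μ)
    (hf₀ : Integrable f₀ μ) (hg : AEStronglyMeasurable g μ) {C : ℝ} (hgC : ∀ x, ‖g x‖ ≤ C)
    (hlim : Tendsto (fun k => ∫ x, |f k x - f₀ x| ∂μ) atTop (𝓝 0)) :
    Tendsto (fun k => ∫ x, f k x * g x ∂μ) atTop (𝓝 (∫ x, f₀ x * g x ∂μ)) := by
  rw [tendsto_iff_norm_sub_tendsto_zero]
  refine squeeze_zero (fun _ => norm_nonneg _) (fun k => ?_) (by simpa using hlim.const_mul C)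
  rw [← integral_sub ((hf k).mul_bdd hg (ae_of_all _ hgC)) (hf₀.mul_bdd hg (ae_of_all _ hgC)),
    ← integral_const_mul]
  refine norm_integral_le_of_norm_le (((hf k).sub hf₀).abs.const_mul C) (ae_of_all _ fun x => ?_)
  rw [← sub_mul, norm_mul, Real.norm_eq_abs, mul_comm]
  exact mul_le_mul_of_nonneg_right (hgC x) (abs_nonneg _)

section Limit

variable {A : Set (Rn n)} {uk : ℕ → Rn n → ℝ} {u : Rn n → ℝ}

lemma tendsto_gInt (huk : ∀ k, IntegrableOn (uk k) A) (hu : IntegrableOn u A)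
    (hconv : Tendsto (fun k => ∫ x in A, |uk k x - u x|) atTop (𝓝 0)) {η : Rn n → Rn1 n}
    (hη : ContDiff ℝ 1 η) (hηc : HasCompactSupport η) :
    Tendsto (fun k => gInt (uk k) A η) atTop (𝓝 (gInt u A η)) := by
  have hdiv := continuous_divN hη.fst
  obtain ⟨B, hB⟩ := hdiv.bounded_above_of_compact_support
    (hasCompactSupport_divN (hηc.comp_left (g := Prod.fst) rfl))
  rw [gInt_eq_add hu hη hηc]
  refine Tendsto.congr (fun k => (gInt_eq_add (huk k) hη hηc).symm) ?_
  exact (tendsto_integral_mul_of_tendsto_integral_abs_sub huk hu hdiv.aestronglyMeasurable hB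
    hconv).add tendsto_const_nhds

lemma tendsto_integral_abs_sub_mul_norm_fderiv (huk : ∀ k, IntegrableOn (uk k) A)
    (hu : IntegrableOn u A) (hconv : Tendsto (fun k => ∫ x in A, |uk k x - u x|) atTop (𝓝 0))
    {w : Rn n → ℝ} (hw : IntegrableOn w A) {ζ : Rn n → ℝ} (hζ : ContDiff ℝ 1 ζ)
    (hζc : HasCompactSupport ζ) :
    Tendsto (fun k => ∫ x in A, |uk k x - w x| * ‖fderiv ℝ ζ x‖) atTop
      (𝓝 (∫ x in A, |u x - w x| * ‖fderiv ℝ ζ x‖)) := by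
  have hdζ := (hζ.continuous_fderiv one_ne_zero).norm
  obtain ⟨B, hB⟩ := hdζ.bounded_above_of_compact_support (hζc.fderiv (𝕜 := ℝ)).norm
  refine tendsto_integral_mul_of_tendsto_integral_abs_sub (fun k => ((huk k).sub hw).abs)
    (hu.sub hw).abs hdζ.aestronglyMeasurable hB ?_
  refine squeeze_zero (fun _ => integral_nonneg fun _ => abs_nonneg _) (fun k => ?_) hconv
  refine integral_mono (((huk k).sub hw).abs.sub (hu.sub hw).abs).abs ((huk k).sub hu).abs
    fun x => ?_
  simpa using abs_abs_sub_abs_le_abs_sub (uk k x - w x) (u x - w x)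

end Limit

section Compactness

variable {Φ : Rn1 n → ℝ} {Ω : Set (Rn n)} {uk : ℕ → Rn n → ℝ} {u : Rn n → ℝ}

lemma gInt_le_of_tendsto_minG (hΦ : IsNorm1 Φ) {C : ℝ} (hC : ∀ ξ, Φ ξ ≤ 1 → ‖ξ.1‖ ≤ C)
    (huk : ∀ k, MinG Φ Ω (uk k)) {A : Set (Rn n)} (hA : CpCtd A Ω) (hu : IntegrableOn u A)
    (hconv : Tendsto (fun k => ∫ x in A, |uk k x - u x|) atTop (𝓝 0))
    {w : Rn n → ℝ} (hw : BVlocFun Ω w) {K : Set (Rn n)} {ζ : Rn n → ℝ} (hζ : IsCutoff ζ K A)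
    {η : Rn n → Rn1 n} (hη : GTest Φ A η) (hηK : tsupport η ⊆ K) :
    gInt u A η ≤ Gfun Φ w A + C * ∫ x in A, |u x - w x| * ‖fderiv ℝ ζ x‖ :=
  le_of_tendsto_of_tendsto' (tendsto_gInt (fun k => (huk k).1.1 A hA) hu hconv hη.1 hη.2.1)
    (tendsto_const_nhds.add ((tendsto_integral_abs_sub_mul_norm_fderiv
      (fun k => (huk k).1.1 A hA) hu hconv (hw.1 A hA) hζ.contDiff
      hζ.hasCompactSupport).const_mul C))
    fun k => (huk k).gInt_le hΦ hC hw hA hζ hη hηK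

lemma bvlocFun_of_tendsto_minG (hΦ : IsNorm1 Φ) (hΩ : IsOpen Ω) (huk : ∀ k, MinG Φ Ω (uk k))
    (hu : ∀ A, CpCtd A Ω → IntegrableOn u A)
    (hconv : ∀ A, CpCtd A Ω → Tendsto (fun k => ∫ x in A, |uk k x - u x|) atTop (𝓝 0)) :
    BVlocFun Ω u := by
  obtain ⟨C, hC⟩ := hΦ.exists_norm_fst_le
  refine (bvlocFun_iff hΦ).2 ⟨hu, fun A hA => ?_⟩
  obtain ⟨A', hA', hAA'⟩ := exists_cpCtd_closure_subset hA hΩ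
  obtain ⟨ζ, hζ⟩ := exists_isCutoff hA.2.1 hA'.1 hAA'
  -- `ζ` is chosen before `η`, so the bound is uniform in `η`
  refine bddAbove_Gset (b := Gfun Φ (fun _ => 0) A'
    + C * ∫ x in A', |u x - 0| * ‖fderiv ℝ ζ x‖) fun η hη => ?_
  rw [← gInt_eq_of_subset hA'.1.measurableSet (subset_closure.trans hAA') u hη.2.2.1]
  exact gInt_le_of_tendsto_minG hΦ hC huk hA' (hu A' hA') (hconv A' hA') (bvlocFun_zero Ω) hζ
    (hη.mono (subset_closure.trans hAA')) (hη.2.2.1.trans subset_closure)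

lemma Gfun_le_of_tendsto_minG (hΦ : IsNorm1 Φ) (huk : ∀ k, MinG Φ Ω (uk k)) {A : Set (Rn n)}
    (hA : CpCtd A Ω) (hu : IntegrableOn u A)
    (hconv : Tendsto (fun k => ∫ x in A, |uk k x - u x|) atTop (𝓝 0))
    {v : Rn n → ℝ} (hv : BVlocFun Ω v) (huv : CptSupp A fun x => u x - v x) :
    Gfun Φ u A ≤ Gfun Φ v A := by
  obtain ⟨C, hC⟩ := hΦ.exists_norm_fst_le
  refine Gfun_le hΦ fun η hη => ?_
  obtain ⟨ζ, hζ⟩ := exists_isCutoff (hη.2.1.union huv.1) hA.1 (union_subset hη.2.2.1 huv.2)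
  have hzero : ∫ x in A, |u x - v x| * ‖fderiv ℝ ζ x‖ = 0 := by
    refine integral_eq_zero_of_ae (ae_of_all _ fun x => ?_)
    by_cases hx : x ∈ tsupport η ∪ tsupport fun x => u x - v x
    · simp [hζ.fderiv_eq_zero hx]
    · simp [image_eq_zero_of_notMem_tsupport (fun h => hx (Or.inr h))]
  simpa [hzero] using
    gInt_le_of_tendsto_minG hΦ hC huk hA hu hconv hv hζ hη subset_union_left

end Compactness

end

theorem minG_compactness {n : ℕ} (Φ : Rn1 n → ℝ) (hΦ : IsNorm1 Φ)
    (Ω : Set (Rn n)) (hΩ : IsOpen Ω) (uk : ℕ → Rn n → ℝ)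
    (huk : ∀ k, MinG Φ Ω (uk k)) (u : Rn n → ℝ)
    (hu : ∀ A, CpCtd A Ω → IntegrableOn u A)
    (hconv : ∀ A, CpCtd A Ω →
      Tendsto (fun k => ∫ x in A, |uk k x - u x|) atTop (nhds 0)) :
    BVlocFun Ω u ∧ MinG Φ Ω u := by
  have hBV : BVlocFun Ω u := bvlocFun_of_tendsto_minG hΦ hΩ huk hu hconv
  exact ⟨hBV, hBV, fun A hA v hv huv =>
    Gfun_le_of_tendsto_minG hΦ huk hA (hu A hA) (hconv A hA) hv huv⟩
end

section
/- Let Φ be a norm on ℝ^{n+1} and let φ(ξ̂) = Φ(ξ̂, 0) be its restriction to the horizontal hyperplane. Then φ^o(ξ̂*) = Φ^o(ξ̂*, 0) for all ξ̂* ∈ ℝ^n if and only if the boundary of B_Φ is a generalized graph in the vertical direction, i.e. Φ(ξ̂, ξ_{n+1}) ≥ Φ(ξ̂, 0) for all (ξ̂, ξ_{n+1}) ∈ ℝ^{n+1}. -/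
/-!
Since `(ξ̂*, 0) · ξ = ξ̂* · ξ̂`, the value `Φ^o(ξ̂*, 0)` is the supremum of `ξ̂*` over the
horizontal projection of `B_Φ`, and this projection always contains `B_φ`. If `Φ(ξ) ≥ Φ(ξ̂, 0)`
the projection is exactly `B_φ`, so the two suprema agree. Conversely, if `Φ(z) < Φ(ẑ, 0)`,
Hahn–Banach gives a linear functional `ℓ ≤ φ` with `ℓ(ẑ) = φ(ẑ)`, so `φ^o(ℓ) = 1`, while a
suitable multiple of `z` lies in `B_Φ` and gives `ℓ` a value larger than `1`.
-/

open MeasureTheory Set Filter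

theorem image_fst_setOf_le_one_eq {E F : Type*} [Zero F] {p : E × F → ℝ}
    (h : ∀ z, p (z.1, 0) ≤ p z) :
    Prod.fst '' {z | p z ≤ 1} = {x | p (x, 0) ≤ 1} := by
  ext x
  constructor
  · rintro ⟨z, hz, rfl⟩
    exact (h z).trans hz
  · intro hx
    exact ⟨(x, 0), hx, rfl⟩

section SupportFunctional

variable {E F : Type*} [AddCommGroup E] [Module ℝ E] [AddCommGroup F] [Module ℝ F]

theorem ConvexOn.add_le_of_abs_homogeneous {f : E → ℝ} (hconv : ConvexOn ℝ univ f)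
    (hsmul : ∀ (c : ℝ) (x : E), f (c • x) = |c| * f x) (x y : E) :
    f (x + y) ≤ f x + f y := by
  have hmid := hconv.2 (mem_univ x) (mem_univ y) (by norm_num : (0:ℝ) ≤ 1 / 2)
    (by norm_num : (0:ℝ) ≤ 1 / 2) (by norm_num)
  have htwo : x + y = (2:ℝ) • ((1 / 2 : ℝ) • x + (1 / 2 : ℝ) • y) := by
    rw [smul_add, smul_smul, smul_smul]; norm_num
  rw [htwo, hsmul, abs_two]
  simp only [smul_eq_mul] at hmid
  linarith

def Seminorm.ofConvexOn (f : E → ℝ) (hconv : ConvexOn ℝ univ f)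
    (hsmul : ∀ (c : ℝ) (x : E), f (c • x) = |c| * f x) : Seminorm ℝ E :=
  Seminorm.of f (hconv.add_le_of_abs_homogeneous hsmul) fun c x => by
    rw [Real.norm_eq_abs, hsmul]

theorem Seminorm.exists_dual_le_eq (q : Seminorm ℝ E) (x : E) :
    ∃ ℓ : Module.Dual ℝ E, (∀ y, ℓ y ≤ q y) ∧ ℓ x = q x := by
  let f : E →ₗ.[ℝ] ℝ := LinearPMap.mkSpanSingleton' x (q x) fun c hc => by
    rcases smul_eq_zero.mp hc with rfl | rfl <;> simp
  have hf : ∀ y : f.domain, f y ≤ q y := by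
    rintro ⟨y, hy⟩
    obtain ⟨c, rfl⟩ := Submodule.mem_span_singleton.mp hy
    rw [LinearPMap.mkSpanSingleton'_apply, smul_eq_mul, map_smul_eq_mul, Real.norm_eq_abs]
    exact mul_le_mul_of_nonneg_right (le_abs_self c) (apply_nonneg q x)
  obtain ⟨ℓ, hext, hle⟩ := exists_extension_of_le_sublinear f q
    (fun c hc y => by rw [map_smul_eq_mul, Real.norm_eq_abs, abs_of_pos hc])
    (map_add_le_add q) hf
  exact ⟨ℓ, hle, (hext ⟨x, Submodule.mem_span_singleton_self x⟩).trans
    (LinearPMap.mkSpanSingleton'_apply_self _ _ _ _)⟩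

theorem Seminorm.isGreatest_image_setOf_le_one {q : Seminorm ℝ E} {ℓ : Module.Dual ℝ E}
    (hle : ∀ y, ℓ y ≤ q y) {x : E} (hx : ℓ x = q x) (hpos : 0 < q x) :
    IsGreatest (ℓ '' {y | q y ≤ 1}) 1 := by
  refine ⟨⟨(q x)⁻¹ • x, ?_, ?_⟩, ?_⟩
  · change q ((q x)⁻¹ • x) ≤ 1
    rw [map_smul_eq_mul, Real.norm_eq_abs, abs_inv, abs_of_pos hpos,
      inv_mul_cancel₀ hpos.ne']
  · rw [map_smul, smul_eq_mul, hx, inv_mul_cancel₀ hpos.ne']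
  · rintro _ ⟨y, hy, rfl⟩
    exact (hle y).trans hy

theorem Seminorm.exists_dual_sSup_ne (p : Seminorm ℝ (E × F)) {z : E × F}
    (hz : p z < p (z.1, 0)) :
    ∃ ℓ : Module.Dual ℝ E,
      sSup (ℓ '' {x | p (x, 0) ≤ 1}) ≠ sSup ((fun w => ℓ w.1) '' {w | p w ≤ 1}) := by
  have hpos : 0 < p (z.1, 0) := (apply_nonneg p z).trans_lt hz
  obtain ⟨ℓ, hle, heq⟩ := (p.comp (LinearMap.inl ℝ E F)).exists_dual_le_eq z.1
  refine ⟨ℓ, fun hsup => ?_⟩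
  have hone : sSup (ℓ '' {x | p (x, 0) ≤ 1}) = 1 :=
    (Seminorm.isGreatest_image_setOf_le_one hle heq hpos).csSup_eq
  rw [hone] at hsup
  set T := (fun w => ℓ w.1) '' {w | p w ≤ 1}
  -- An unbounded `T` would have the junk supremum `0`.
  have hbdd : BddAbove T := by
    by_contra h
    rw [Real.sSup_of_not_bddAbove h] at hsup
    exact one_ne_zero hsup
  -- `t` is chosen so that `t * p z ≤ 1 < t * p (z.1, 0)`.
  have hs : 0 < p z + p (z.1, 0) := add_pos_of_nonneg_of_pos (apply_nonneg p z) hpos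
  set t := 2 / (p z + p (z.1, 0))
  have hmem : t * p (z.1, 0) ∈ T := by
    refine ⟨t • z, ?_, ?_⟩
    · change p (t • z) ≤ 1
      rw [map_smul_eq_mul, Real.norm_eq_abs, abs_of_pos (div_pos two_pos hs),
        div_mul_eq_mul_div, div_le_one hs]
      linarith
    · change ℓ (t • z.1) = t * p (z.1, 0)
      rw [map_smul, smul_eq_mul, heq, Seminorm.comp_apply, LinearMap.inl_apply]
  have hgt : 1 < t * p (z.1, 0) := by
    rw [div_mul_eq_mul_div, one_lt_div hs]
    linarith
  exact (le_csSup hbdd hmem).trans_eq hsup.symm |>.not_gt hgt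

theorem Seminorm.forall_sSup_image_eq_iff (p : Seminorm ℝ (E × F)) :
    (∀ ℓ : Module.Dual ℝ E,
      sSup (ℓ '' {x | p (x, 0) ≤ 1}) = sSup ((fun w => ℓ w.1) '' {w | p w ≤ 1})) ↔
      ∀ z, p (z.1, 0) ≤ p z := by
  refine ⟨fun h => ?_, fun h ℓ => ?_⟩
  · by_contra! hne
    obtain ⟨z, hz⟩ := hne
    obtain ⟨ℓ, hℓ⟩ := p.exists_dual_sSup_ne hz
    exact hℓ (h ℓ)
  · rw [← image_fst_setOf_le_one_eq h, image_image]

end SupportFunctional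

section Euclidean

variable {n : ℕ}

theorem dotn_eq_inner (x y : Rn n) : dotn x y = inner ℝ x y := by
  simp [dotn, PiLp.inner_apply, mul_comm]

theorem forall_dotn_iff {P : (Rn n → ℝ) → Prop} :
    (∀ xs, P (dotn xs)) ↔ ∀ ℓ : Module.Dual ℝ (Rn n), P ℓ := by
  refine ⟨fun h ℓ => ?_, fun h xs => ?_⟩
  · set xs := (InnerProductSpace.toDual ℝ (Rn n)).symm (LinearMap.toContinuousLinearMap ℓ)
    have hxs : dotn xs = ℓ := by
      ext y
      rw [dotn_eq_inner, InnerProductSpace.toDual_symm_apply]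
      rfl
    rw [← hxs]
    exact h xs
  · have hxs : ⇑(innerₗ (Rn n) xs) = dotn xs := by
      ext y
      rw [dotn_eq_inner, innerₗ_apply_apply]
    rw [← hxs]
    exact h _

theorem dual1_snd_zero (Φ : Rn1 n → ℝ) (xs : Rn n) :
    dual1 Φ (xs, 0) = sSup ((fun w => dotn xs w.1) '' {w | Φ w ≤ 1}) := by
  simp [dual1, dotp]

end Euclidean

theorem dual_restriction_eq_iff_generalized_graph {n : ℕ} (Φ : Rn1 n → ℝ)
    (hΦ : IsNorm1 Φ) :
    (∀ xs : Rn n, dualN (fun ξh : Rn n => Φ (ξh, (0:ℝ))) xs = dual1 Φ (xs, (0:ℝ))) ↔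
      (∀ ξ : Rn1 n, Φ (ξ.1, (0:ℝ)) ≤ Φ ξ) := by
  simp only [dual1_snd_zero, dualN]
  exact (forall_dotn_iff (P := fun f =>
      sSup (f '' {x | Φ (x, 0) ≤ 1}) = sSup ((fun w => f w.1) '' {w | Φ w ≤ 1}))).trans
    (Seminorm.ofConvexOn Φ hΦ.1 hΦ.2.1).forall_sSup_image_eq_iff
end
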